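/- arXiv:1710.07576 — 6 statements merged into one kernel-verified Lean document; each statement's English description precedes it below -/
import Mathlib

section
/- De Caen's lower bound: in a finite probability space, if P(A_i) > 0 for all i, then P(⋃_{i=1}^N A_i) ≥ ∑_{i=1}^N P(A_i)² / (∑_{j=1}^N P(A_i ∩ A_j)). -/
/-!
Let `d ω` be the number of events containing the point `ω`. Then
`∑ j, P (A i ∩ A j) = ∑ ω ∈ A i, d ω * P {ω}`, and Cauchy–Schwarz gives
`P (A i) ^ 2 ≤ (∑ ω ∈ A i, P {ω} / d ω) * (∑ ω ∈ A i, d ω * P {ω})`.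
Summing `∑ ω ∈ A i, P {ω} / d ω` over `i` counts every point of the union exactly
`d ω` times, so the total is `P (⋃ i, A i)`.
-/

open MeasureTheory Finset

namespace Finset

variable {ι Ω R : Type*} [Fintype ι] [DecidableEq Ω] (A : ι → Finset Ω)

def coverCount (ω : Ω) : ℕ := #{i | ω ∈ A i}

lemma coverCount_pos {i : ι} {ω : Ω} (h : ω ∈ A i) : 0 < coverCount A ω :=
  card_pos.2 ⟨i, by simpa using h⟩

lemma sum_sum_inter_eq_sum_coverCount_mul [Semiring R] (p : Ω → R) (i : ι) :
    ∑ j, ∑ ω ∈ A i ∩ A j, p ω = ∑ ω ∈ A i, coverCount A ω * p ω := by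
  rw [sum_comm' (t' := A i) (s' := fun ω => {j | ω ∈ A j}) (by simp [and_comm])]
  simp [coverCount]

variable [Field R] [LinearOrder R] [IsStrictOrderedRing R] (p : Ω → R)

lemma sum_sum_div_coverCount_eq_sum_biUnion :
    ∑ i, ∑ ω ∈ A i, p ω / coverCount A ω = ∑ ω ∈ univ.biUnion A, p ω := by
  rw [sum_comm' (t' := univ.biUnion A) (s' := fun ω => {i | ω ∈ A i})
    (by simpa using fun i ω h => ⟨i, h⟩)]
  refine sum_congr rfl fun ω hω => ?_
  obtain ⟨i, -, hi⟩ := mem_biUnion.1 hω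
  have hd : (coverCount A ω : R) ≠ 0 := by exact_mod_cast (coverCount_pos A hi).ne'
  rw [sum_const, nsmul_eq_mul]
  exact mul_div_cancel₀ _ hd

lemma sq_sum_div_sum_coverCount_mul_le {i : ι} (hp : ∀ ω ∈ A i, 0 ≤ p ω) :
    (∑ ω ∈ A i, p ω) ^ 2 / ∑ ω ∈ A i, coverCount A ω * p ω ≤
      ∑ ω ∈ A i, p ω / coverCount A ω := by
  have hd : ∀ ω ∈ A i, (0 : R) < coverCount A ω := fun ω hω => by
    exact_mod_cast coverCount_pos A hω
  refine div_le_of_le_mul₀ (sum_nonneg fun ω hω => mul_nonneg (hd ω hω).le (hp ω hω))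
    (sum_nonneg fun ω hω => div_nonneg (hp ω hω) (hd ω hω).le)
    (sum_sq_le_sum_mul_sum_of_sq_le_mul _ (fun ω hω => div_nonneg (hp ω hω) (hd ω hω).le)
      (fun ω hω => mul_nonneg (hd ω hω).le (hp ω hω)) fun ω hω => ?_)
  have hdω := (hd ω hω).ne'
  exact le_of_eq (by field_simp)

theorem sum_sq_sum_div_sum_sum_inter_le (hp : ∀ ω, 0 ≤ p ω) :
    ∑ i, (∑ ω ∈ A i, p ω) ^ 2 / ∑ j, ∑ ω ∈ A i ∩ A j, p ω ≤ ∑ ω ∈ univ.biUnion A, p ω := by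
  rw [← sum_sum_div_coverCount_eq_sum_biUnion]
  gcongr with i
  rw [sum_sum_inter_eq_sum_coverCount_mul]
  exact sq_sum_div_sum_coverCount_mul_le A p fun ω _ => hp ω

end Finset

lemma MeasureTheory.measureReal_eq_sum_singleton {Ω : Type*} [MeasurableSpace Ω]
    [MeasurableSingletonClass Ω] (μ : Measure Ω) [SigmaFinite μ] (s : Set Ω) [Fintype s] :
    μ.real s = ∑ ω ∈ s.toFinset, μ.real {ω} := by
  rw [sum_measureReal_singleton, Set.coe_toFinset]

theorem de_caen_bound_general {Ω : Type*} [Fintype Ω] [MeasurableSpace Ω]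
    [DiscreteMeasurableSpace Ω] (P : Measure Ω) [IsProbabilityMeasure P] (N : ℕ)
    (A : Fin N → Set Ω) :
    (P (⋃ i, A i)).toReal ≥
      ∑ i : Fin N, (P (A i)).toReal ^ 2 / (∑ j : Fin N, (P (A i ∩ A j)).toReal) := by
  classical
  have key := sum_sq_sum_div_sum_sum_inter_le (fun i => (A i).toFinset) (fun ω => P.real {ω})
    fun _ => measureReal_nonneg
  simp only [← Set.toFinset_inter, ← Set.toFinset_iUnion, ← measureReal_eq_sum_singleton] at key
  exact key

theorem de_caen_bound {Ω : Type*} [Fintype Ω] [MeasurableSpace Ω]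
    [DiscreteMeasurableSpace Ω] (P : Measure Ω) [IsProbabilityMeasure P] (N : ℕ)
    (A : Fin N → Set Ω) (hpos : ∀ i, 0 < (P (A i)).toReal) :
    (P (⋃ i, A i)).toReal ≥
      ∑ i : Fin N, (P (A i)).toReal ^ 2 / (∑ j : Fin N, (P (A i ∩ A j)).toReal) :=
  de_caen_bound_general P N A
end

section
/- For nonnegative reals x, y with x + y > 0 and any positive integer k, ((x/k + y/(k+1)) · (k·x + (k+1)·y)) / (x + y)² = 1 + (1/(k(k+1))) · xy/(x+y)² ≤ 9/8. -/
theorem kat_key_estimate (x y : ℝ) (hx : 0 ≤ x) (hy : 0 ≤ y) (hxy : 0 < x + y)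
    (k : ℕ) (hk : 1 ≤ k) :
    ((x / k + y / (k + 1)) * (k * x + (k + 1) * y)) / (x + y) ^ 2 =
        1 + (1 / ((k : ℝ) * (k + 1))) * (x * y / (x + y) ^ 2) ∧
      ((x / k + y / (k + 1)) * (k * x + (k + 1) * y)) / (x + y) ^ 2 ≤ 9 / 8 := by
  have hk' : (1 : ℝ) ≤ (k : ℝ) := by exact_mod_cast hk
  have hkpos : (0 : ℝ) < k := by linarith
  have hk1 : (0 : ℝ) < (k : ℝ) + 1 := by linarith
  have heq : ((x / k + y / (k + 1)) * (k * x + (k + 1) * y)) / (x + y) ^ 2 =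
      1 + (1 / ((k : ℝ) * (k + 1))) * (x * y / (x + y) ^ 2) := by
    field_simp
    ring
  refine ⟨heq, ?_⟩
  rw [heq]
  have h1 : x * y / (x + y) ^ 2 ≤ 1 / 4 := by
    rw [div_le_div_iff₀ (by positivity) (by norm_num)]
    nlinarith [sq_nonneg (x - y)]
  have h2 : 1 / ((k : ℝ) * (k + 1)) ≤ 1 / 2 := by
    apply one_div_le_one_div_of_le (by norm_num)
    nlinarith
  have h3 : (0 : ℝ) ≤ x * y / (x + y) ^ 2 := by positivity
  have h4 : (0 : ℝ) ≤ 1 / ((k : ℝ) * (k + 1)) := by positivity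
  nlinarith
end

section
/- Dawson–Sankoff bound: for events A_1,...,A_N with θ₁ := ∑_i P(A_i) > 0 and θ₂ := ∑_{i<j} P(A_i ∩ A_j), letting κ := 2θ₂/θ₁ − ⌊2θ₂/θ₁⌋, one has P(⋃_{i=1}^N A_i) ≥ κθ₁²/((2−κ)θ₁ + 2θ₂) + (1−κ)θ₁²/((1−κ)θ₁ + 2θ₂). -/
/-!
Let `n ω` be the number of events containing `ω`. Then `θ₁ = E n`, `θ₂ = E (n choose 2)` and
`P (⋃ i, A i) = P (n > 0)`. For every integer `a`, `(n - a) (n - a - 1) ≥ 0` because `n` is an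
integer, i.e. `(2a + 1) n ≤ n + 2 (n choose 2) + a (a + 1) 1_{n > 0}`. Taking expectations gives
`(2a + 1) θ₁ ≤ θ₁ + 2θ₂ + a (a + 1) P (⋃ i, A i)`, and the choice `a = ⌊2θ₂/θ₁⌋ + 1` yields the
Dawson–Sankoff bound.
-/

open MeasureTheory Finset

theorem card_filter_mem_inter_eq_choose_two {Ω ι : Type*} [Fintype ι] [LinearOrder ι]
    (A : ι → Set Ω) (ω : Ω) [DecidablePred (ω ∈ A ·)] :
    #{p ∈ univ.filter (fun p : ι × ι => p.1 < p.2) | ω ∈ A p.1 ∩ A p.2} =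
      (#{i | ω ∈ A i}).choose 2 := by
  rw [← card_product_filter_lt]
  congr 1
  ext p
  simp only [mem_filter, mem_univ, mem_product, true_and, Set.mem_inter_iff]
  tauto

theorem two_mul_add_one_mul_le_add_two_mul_choose_two (a : ℤ) (n : ℕ) :
    (2 * a + 1) * (n : ℝ) ≤ n + 2 * n.choose 2 + a * (a + 1) := by
  have h_consecutive : (0 : ℝ) ≤ (n - a) * (n - a - 1) := by
    rcases le_or_gt (n : ℤ) a with h | h
    · have h' : (n : ℝ) ≤ a := by exact_mod_cast h
      nlinarith
    · have h' : (a : ℝ) + 1 ≤ n := by exact_mod_cast h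
      nlinarith
  rw [Nat.cast_choose_two]
  nlinarith

theorem natCast_card_filter_mem_eq_sum_indicator {Ω ι : Type*} (s : Finset ι) (B : ι → Set Ω)
    (ω : Ω) [DecidablePred (ω ∈ B ·)] :
    (#{i ∈ s | ω ∈ B i} : ℝ) = ∑ i ∈ s, (B i).indicator 1 ω := by
  rw [natCast_card_filter]
  exact sum_congr rfl fun i _ => by simp [Set.indicator_apply]

section Moments

variable {Ω ι : Type*} [MeasurableSpace Ω] (μ : Measure Ω) [IsFiniteMeasure μ]

theorem integrable_card_filter_mem {s : Finset ι} {B : ι → Set Ω} [∀ ω, DecidablePred (ω ∈ B ·)]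
    (hB : ∀ i ∈ s, MeasurableSet (B i)) :
    Integrable (fun ω => (#{i ∈ s | ω ∈ B i} : ℝ)) μ := by
  simp_rw [natCast_card_filter_mem_eq_sum_indicator]
  exact integrable_finsetSum s fun i hi => (integrable_const 1).indicator (hB i hi)

theorem integral_card_filter_mem {s : Finset ι} {B : ι → Set Ω} [∀ ω, DecidablePred (ω ∈ B ·)]
    (hB : ∀ i ∈ s, MeasurableSet (B i)) :
    ∫ ω, (#{i ∈ s | ω ∈ B i} : ℝ) ∂μ = ∑ i ∈ s, μ.real (B i) := by
  simp_rw [natCast_card_filter_mem_eq_sum_indicator]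
  rw [integral_finsetSum s fun i hi => (integrable_const 1).indicator (hB i hi)]
  exact sum_congr rfl fun i hi => integral_indicator_one (hB i hi)

theorem mul_sum_measureReal_le_add_mul_measureReal_iUnion [Fintype ι] [LinearOrder ι]
    (A : ι → Set Ω) (hA : ∀ i, MeasurableSet (A i)) (a : ℤ) :
    (2 * a + 1) * ∑ i, μ.real (A i) ≤
      ∑ i, μ.real (A i) +
        2 * ∑ p ∈ univ.filter (fun p : ι × ι => p.1 < p.2), μ.real (A p.1 ∩ A p.2) +
          a * (a + 1) * μ.real (⋃ i, A i) := by
  classical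
  set n : Ω → ℕ := fun ω => #{i | ω ∈ A i}
  have hA_pairs : ∀ p ∈ univ.filter (fun p : ι × ι => p.1 < p.2),
      MeasurableSet (A p.1 ∩ A p.2) := fun p _ => (hA p.1).inter (hA p.2)
  have h_choose_eq : (fun ω => ((n ω).choose 2 : ℝ)) = fun ω =>
      (#{p ∈ univ.filter (fun p : ι × ι => p.1 < p.2) | ω ∈ A p.1 ∩ A p.2} : ℝ) := by
    simp_rw [n, card_filter_mem_inter_eq_choose_two]
  have hn_int : Integrable (fun ω => (n ω : ℝ)) μ :=
    integrable_card_filter_mem μ fun i _ => hA i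
  have h_choose_int : Integrable (fun ω => ((n ω).choose 2 : ℝ)) μ := by
    rw [h_choose_eq]
    exact integrable_card_filter_mem μ hA_pairs
  have h_union_int : Integrable ((⋃ i, A i).indicator (1 : Ω → ℝ)) μ :=
    (integrable_const 1).indicator (MeasurableSet.iUnion hA)
  have h_pointwise : ∀ ω, (2 * a + 1) * (n ω : ℝ) ≤
      n ω + 2 * (n ω).choose 2 + a * (a + 1) * (⋃ i, A i).indicator 1 ω := by
    intro ω
    by_cases hω : ω ∈ ⋃ i, A i
    · simpa [hω] using two_mul_add_one_mul_le_add_two_mul_choose_two a (n ω)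
    · have hn : n ω = 0 := by simpa [n] using hω
      simp [hn, hω]
  calc (2 * a + 1) * ∑ i, μ.real (A i) = ∫ ω, (2 * a + 1) * (n ω : ℝ) ∂μ := by
        rw [integral_const_mul, integral_card_filter_mem μ fun i _ => hA i]
    _ ≤ ∫ ω, ((n ω : ℝ) + 2 * (n ω).choose 2 + a * (a + 1) * (⋃ i, A i).indicator 1 ω) ∂μ :=
        integral_mono (hn_int.const_mul _)
          ((hn_int.add (h_choose_int.const_mul _)).add (h_union_int.const_mul _)) h_pointwise
    _ = _ := by
        rw [integral_add, integral_add, integral_const_mul, integral_const_mul,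
          integral_card_filter_mem μ fun i _ => hA i, h_choose_eq,
          integral_card_filter_mem μ hA_pairs, integral_indicator_one (MeasurableSet.iUnion hA)]
        exacts [hn_int, h_choose_int.const_mul 2, hn_int.add (h_choose_int.const_mul 2),
          h_union_int.const_mul _]

end Moments

noncomputable def dawsonSankoffBound (θ₁ θ₂ : ℝ) : ℝ :=
  let κ := Int.fract (2 * θ₂ / θ₁)
  κ * θ₁ ^ 2 / ((2 - κ) * θ₁ + 2 * θ₂) + (1 - κ) * θ₁ ^ 2 / ((1 - κ) * θ₁ + 2 * θ₂)

theorem dawsonSankoffBound_le_of_forall_int {θ₁ θ₂ U : ℝ} (hθ₁ : 0 < θ₁) (hθ₂ : 0 ≤ θ₂)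
    (h : ∀ a : ℤ, (2 * a + 1) * θ₁ ≤ θ₁ + 2 * θ₂ + a * (a + 1) * U) :
    dawsonSankoffBound θ₁ θ₂ ≤ U := by
  set m := ⌊2 * θ₂ / θ₁⌋
  set κ := Int.fract (2 * θ₂ / θ₁)
  have hm : (0 : ℝ) ≤ m := by exact_mod_cast Int.floor_nonneg.mpr (by positivity)
  have h_split : 2 * θ₂ = (m + κ) * θ₁ := by
    rw [Int.floor_add_fract, div_mul_cancel₀ _ hθ₁.ne']
  have h_best := h (m + 1)
  push_cast at h_best
  rw [dawsonSankoffBound, show (2 - κ) * θ₁ + 2 * θ₂ = (m + 2) * θ₁ by rw [h_split]; ring,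
    show (1 - κ) * θ₁ + 2 * θ₂ = (m + 1) * θ₁ by rw [h_split]; ring,
    div_add_div _ _ (by positivity) (by positivity), div_le_iff₀ (by positivity)]
  nlinarith [mul_le_mul_of_nonneg_left h_best (sq_nonneg θ₁)]

theorem dawson_sankoff_bound_general {Ω : Type*} [MeasurableSpace Ω]
    [DiscreteMeasurableSpace Ω] (P : Measure Ω) [IsProbabilityMeasure P] (N : ℕ)
    (A : Fin N → Set Ω)
    (θ₁ θ₂ κ : ℝ)
    (hθ₁ : θ₁ = ∑ i : Fin N, (P (A i)).toReal)
    (hθ₂ : θ₂ = ∑ p ∈ Finset.univ.filter (fun p : Fin N × Fin N => p.1 < p.2),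
        (P (A p.1 ∩ A p.2)).toReal)
    (hpos : 0 < θ₁)
    (hκ : κ = 2 * θ₂ / θ₁ - ⌊2 * θ₂ / θ₁⌋) :
    (P (⋃ i, A i)).toReal ≥
      κ * θ₁ ^ 2 / ((2 - κ) * θ₁ + 2 * θ₂) +
        (1 - κ) * θ₁ ^ 2 / ((1 - κ) * θ₁ + 2 * θ₂) := by
  rw [hκ, Int.self_sub_floor]
  have hθ₂_nonneg : 0 ≤ θ₂ := hθ₂ ▸ sum_nonneg fun _ _ => ENNReal.toReal_nonneg
  subst hθ₁ hθ₂
  exact dawsonSankoffBound_le_of_forall_int hpos hθ₂_nonneg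
    (mul_sum_measureReal_le_add_mul_measureReal_iUnion P A fun _ => .of_discrete)

theorem dawson_sankoff_bound {Ω : Type*} [Fintype Ω] [MeasurableSpace Ω]
    [DiscreteMeasurableSpace Ω] (P : Measure Ω) [IsProbabilityMeasure P] (N : ℕ)
    (A : Fin N → Set Ω)
    (θ₁ θ₂ κ : ℝ)
    (hθ₁ : θ₁ = ∑ i : Fin N, (P (A i)).toReal)
    (hθ₂ : θ₂ = ∑ p ∈ Finset.univ.filter (fun p : Fin N × Fin N => p.1 < p.2),
        (P (A p.1 ∩ A p.2)).toReal)
    (hpos : 0 < θ₁)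
    (hκ : κ = 2 * θ₂ / θ₁ - ⌊2 * θ₂ / θ₁⌋) :
    (P (⋃ i, A i)).toReal ≥
      κ * θ₁ ^ 2 / ((2 - κ) * θ₁ + 2 * θ₂) +
        (1 - κ) * θ₁ ^ 2 / ((1 - κ) * θ₁ + 2 * θ₂) :=
  dawson_sankoff_bound_general P N A θ₁ θ₂ κ hθ₁ hθ₂ hpos hκ
end

section
/- Upper bound via degrees: for events A_1,...,A_N in a finite probability space, P(⋃_{i=1}^N A_i) ≤ ∑_{i=1}^N P(A_i) − (1/N)·∑_{i=1}^N ∑_{j≠i} P(A_i ∩ A_j). -/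
/-!
Let `d(ω)` be the number of events containing `ω`. Then `∑ P(Aᵢ) = 𝔼[d]` and
`∑_{i ≠ j} P(Aᵢ ∩ Aⱼ) = 𝔼[d (d - 1)]`, while `P(⋃ Aᵢ) = 𝔼[1_{d ≥ 1}]`. So the bound follows by
integrating the pointwise inequality `1_{d ≥ 1} ≤ d - d (d - 1) / N`, which for `1 ≤ d ≤ N` is
`0 ≤ (d - 1) (N - d)`.
-/

open MeasureTheory Finset

lemma Finset.sum_sum_ne_mul {ι R : Type*} [Fintype ι] [DecidableEq ι] [CommRing R] (a : ι → R) :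
    ∑ i, ∑ j ∈ univ.filter (· ≠ i), a i * a j = (∑ i, a i) ^ 2 - ∑ i, a i ^ 2 := by
  simp only [filter_ne', sum_erase_eq_sub (mem_univ _)]
  rw [sq, sum_mul_sum]
  simp only [sum_sub_distrib, sq]

lemma one_le_sub_one_div_mul_mul_sub_one {d N : ℕ} (hd : 1 ≤ d) (hdN : d ≤ N) :
    (1 : ℝ) ≤ d - (1 / N) * (d * (d - 1)) := by
  have hd' : (1 : ℝ) ≤ d := by exact_mod_cast hd
  have hdN' : (d : ℝ) ≤ N := by exact_mod_cast hdN
  rw [le_sub_iff_add_le, ← le_sub_iff_add_le', one_div, inv_mul_le_iff₀ (by linarith)]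
  nlinarith

section Indicator

variable {ι Ω : Type*} [Fintype ι]

open scoped Classical in
lemma sum_indicator_one_apply (A : ι → Set Ω) (x : Ω) :
    ∑ i, (A i).indicator (1 : Ω → ℝ) x = #{i | x ∈ A i} := by
  simp [Set.indicator_apply]

open scoped Classical in
lemma sum_sum_ne_indicator_inter_one_apply [DecidableEq ι] (A : ι → Set Ω) (x : Ω) :
    ∑ i, ∑ j ∈ univ.filter (· ≠ i), (A i ∩ A j).indicator (1 : Ω → ℝ) x =
      #{i | x ∈ A i} * (#{i | x ∈ A i} - 1) := by
  have hsq : ∀ i, (A i).indicator (1 : Ω → ℝ) x ^ 2 = (A i).indicator 1 x := fun i => by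
    by_cases hi : x ∈ A i <;> simp [hi]
  simp_rw [Set.inter_indicator_one, Pi.mul_apply, sum_sum_ne_mul, hsq, sum_indicator_one_apply]
  ring

lemma indicator_iUnion_one_apply_le [DecidableEq ι] (A : ι → Set Ω) (x : Ω) :
    (⋃ i, A i).indicator (1 : Ω → ℝ) x ≤
      ∑ i, (A i).indicator 1 x -
        (1 / Fintype.card ι) * ∑ i, ∑ j ∈ univ.filter (· ≠ i), (A i ∩ A j).indicator 1 x := by
  classical
  rw [sum_indicator_one_apply, sum_sum_ne_indicator_inter_one_apply]
  by_cases hx : x ∈ ⋃ i, A i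
  · obtain ⟨i, hi⟩ := Set.mem_iUnion.mp hx
    rw [Set.indicator_of_mem hx]
    exact one_le_sub_one_div_mul_mul_sub_one (card_pos.mpr ⟨i, by simpa⟩) (card_le_univ _)
  · have hd : #{i | x ∈ A i} = 0 := by
      simpa [filter_eq_empty_iff] using hx
    simp [Set.indicator_of_notMem hx, hd]

end Indicator

section Measure

variable {ι Ω : Type*} [MeasurableSpace Ω] (μ : Measure Ω) [IsFiniteMeasure μ]

lemma integrable_sum_indicator_one (s : Finset ι) {A : ι → Set Ω}
    (hA : ∀ i ∈ s, MeasurableSet (A i)) :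
    Integrable (fun x => ∑ i ∈ s, (A i).indicator (1 : Ω → ℝ) x) μ :=
  integrable_finsetSum s fun i hi => (integrable_const 1).indicator (hA i hi)

lemma integral_sum_indicator_one (s : Finset ι) {A : ι → Set Ω}
    (hA : ∀ i ∈ s, MeasurableSet (A i)) :
    ∫ x, ∑ i ∈ s, (A i).indicator (1 : Ω → ℝ) x ∂μ = ∑ i ∈ s, μ.real (A i) := by
  rw [integral_finsetSum s fun i hi => (integrable_const 1).indicator (hA i hi)]
  exact sum_congr rfl fun i hi => integral_indicator_one (hA i hi)

theorem measureReal_iUnion_le_sum_sub_one_div_mul_sum_inter [Fintype ι] [DecidableEq ι]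
    {A : ι → Set Ω} (hA : ∀ i, MeasurableSet (A i)) :
    μ.real (⋃ i, A i) ≤
      ∑ i, μ.real (A i) -
        (1 / Fintype.card ι) * ∑ i, ∑ j ∈ univ.filter (· ≠ i), μ.real (A i ∩ A j) := by
  have hinter : ∀ i, ∀ j ∈ univ.filter (· ≠ i), MeasurableSet (A i ∩ A j) :=
    fun i j _ => (hA i).inter (hA j)
  have hpairs : Integrable
      (fun x => ∑ i, ∑ j ∈ univ.filter (· ≠ i), (A i ∩ A j).indicator (1 : Ω → ℝ) x) μ :=
    integrable_finsetSum _ fun i _ => integrable_sum_indicator_one μ _ (hinter i)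
  calc μ.real (⋃ i, A i) = ∫ x, (⋃ i, A i).indicator (1 : Ω → ℝ) x ∂μ :=
        (integral_indicator_one (MeasurableSet.iUnion hA)).symm
    _ ≤ ∫ x, (∑ i, (A i).indicator (1 : Ω → ℝ) x - (1 / Fintype.card ι) *
          ∑ i, ∑ j ∈ univ.filter (· ≠ i), (A i ∩ A j).indicator 1 x) ∂μ :=
        integral_mono ((integrable_const 1).indicator (MeasurableSet.iUnion hA))
          ((integrable_sum_indicator_one μ _ fun i _ => hA i).sub (hpairs.const_mul _))
          (indicator_iUnion_one_apply_le A)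
    _ = _ := by
        rw [integral_sub (integrable_sum_indicator_one μ _ fun i _ => hA i) (hpairs.const_mul _),
          integral_const_mul, integral_sum_indicator_one μ _ fun i _ => hA i,
          integral_finsetSum _ fun i _ => integrable_sum_indicator_one μ _ (hinter i)]
        simp only [integral_sum_indicator_one μ _ (hinter _)]

end Measure

theorem union_upper_bound_degrees_general {Ω : Type*} [MeasurableSpace Ω]
    [DiscreteMeasurableSpace Ω] (P : Measure Ω) [IsProbabilityMeasure P] (N : ℕ)
    (A : Fin N → Set Ω) :
    (P (⋃ i, A i)).toReal ≤
      ∑ i : Fin N, (P (A i)).toReal -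
        (1 / N) * ∑ i : Fin N, ∑ j ∈ Finset.univ.filter (fun j => j ≠ i),
          (P (A i ∩ A j)).toReal := by
  simpa [measureReal_def] using
    measureReal_iUnion_le_sum_sub_one_div_mul_sum_inter P fun i : Fin N =>
      MeasurableSet.of_discrete (s := A i)

theorem union_upper_bound_degrees {Ω : Type*} [Fintype Ω] [MeasurableSpace Ω]
    [DiscreteMeasurableSpace Ω] (P : Measure Ω) [IsProbabilityMeasure P] (N : ℕ)
    (hN : 0 < N) (A : Fin N → Set Ω) :
    (P (⋃ i, A i)).toReal ≤
      ∑ i : Fin N, (P (A i)).toReal -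
        (1 / N) * ∑ i : Fin N, ∑ j ∈ Finset.univ.filter (fun j => j ≠ i),
          (P (A i ∩ A j)).toReal :=
  union_upper_bound_degrees_general P N A
end

section
/- Gallot–Kounias bound: let α ∈ ℝ^N with α_i = P(A_i) and Σ ∈ ℝ^{N×N} with Σ_{ij} = P(A_i ∩ A_j). If Σ is invertible, then P(⋃_{i=1}^N A_i) ≥ αᵀ Σ⁻¹ α. -/
open MeasureTheory Finset Matrix

private theorem gk_sum_p_ind {Ω : Type*} [Fintype Ω] [MeasurableSpace Ω]
    [DiscreteMeasurableSpace Ω]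
    (P : Measure Ω) [IsProbabilityMeasure P] (s : Set Ω) :
    (P s).toReal = ∑ ω : Ω, (P {ω}).toReal * s.indicator (fun _ => (1:ℝ)) ω := by
  classical
  have h1 : P s = ∑ ω ∈ s.toFinset, P {ω} := by
    conv_lhs => rw [show s = ⋃ ω ∈ s.toFinset, {ω} by simp]
    rw [measure_biUnion_finset]
    · intro a _ b _ hab; simp [Set.disjoint_singleton, hab]
    · intro b _; exact MeasurableSet.singleton b
  rw [h1, ENNReal.toReal_sum (fun _ _ => measure_ne_top P _)]
  have h2 : ∀ ω : Ω, (P {ω}).toReal * s.indicator (fun _ => (1:ℝ)) ω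
      = if ω ∈ s.toFinset then (P {ω}).toReal else 0 := by
    intro ω; by_cases h : ω ∈ s <;> simp [Set.indicator_apply, h]
  rw [Finset.sum_congr rfl fun ω _ => h2 ω, Finset.sum_ite_mem, Finset.univ_inter]

theorem gallot_kounias_bound {Ω : Type*} [Fintype Ω] [MeasurableSpace Ω]
    [DiscreteMeasurableSpace Ω] (P : Measure Ω) [IsProbabilityMeasure P] (N : ℕ)
    (A : Fin N → Set Ω)
    (α : Fin N → ℝ) (hα : ∀ i, α i = (P (A i)).toReal)
    (S : Matrix (Fin N) (Fin N) ℝ) (hS : ∀ i j, S i j = (P (A i ∩ A j)).toReal)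
    (hinv : IsUnit S.det) :
    (P (⋃ i, A i)).toReal ≥ α ⬝ᵥ S⁻¹.mulVec α := by
  classical
  set p : Ω → ℝ := fun ω => (P {ω}).toReal with hp
  have hpnn : ∀ ω, 0 ≤ p ω := fun ω => ENNReal.toReal_nonneg
  set x : Fin N → ℝ := S⁻¹.mulVec α with hx
  set Y : Ω → ℝ := fun ω => ∑ i, x i * (A i).indicator (fun _ => (1:ℝ)) ω with hY
  set c : ℝ := α ⬝ᵥ S⁻¹.mulVec α with hc
  set U : Set Ω := ⋃ i, A i with hU
  -- S.mulVec x = α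
  have hSx : S.mulVec x = α := by
    rw [hx, mulVec_mulVec, Matrix.mul_nonsing_inv S hinv, one_mulVec]
  -- E[Y] = x ⬝ᵥ α = c
  have hEY : ∑ ω, p ω * Y ω = c := by
    have : ∑ ω, p ω * Y ω = ∑ i, x i * α i := by
      simp_rw [hY, Finset.mul_sum]
      rw [Finset.sum_comm]
      refine Finset.sum_congr rfl fun i _ => ?_
      rw [hα i, gk_sum_p_ind P (A i), Finset.mul_sum]
      refine Finset.sum_congr rfl fun ω _ => by ring
    rw [this, hc, show ∑ i, x i * α i = x ⬝ᵥ α from rfl, dotProduct_comm, hx]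
  -- E[Y²] = x ⬝ᵥ S.mulVec x = c
  have hEY2 : ∑ ω, p ω * Y ω ^ 2 = c := by
    have step : ∑ ω, p ω * Y ω ^ 2 = ∑ i, ∑ j, x i * x j * S i j := by
      have expand : ∀ ω, p ω * Y ω ^ 2
          = ∑ i, ∑ j, x i * x j *
            (p ω * (A i ∩ A j).indicator (fun _ => (1:ℝ)) ω) := by
        intro ω
        have hind : ∀ i j, (A i ∩ A j).indicator (fun _ => (1:ℝ)) ω
            = (A i).indicator (fun _ => (1:ℝ)) ω * (A j).indicator (fun _ => (1:ℝ)) ω := by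
          intro i j
          by_cases hi : ω ∈ A i <;> by_cases hj : ω ∈ A j <;>
            simp [Set.indicator_apply, Set.mem_inter_iff, hi, hj]
        simp_rw [hind]
        rw [hY, sq, Finset.sum_mul_sum]
        rw [Finset.mul_sum]
        refine Finset.sum_congr rfl fun i _ => ?_
        rw [Finset.mul_sum]
        refine Finset.sum_congr rfl fun j _ => by ring
      rw [Finset.sum_congr rfl fun ω _ => expand ω]
      rw [Finset.sum_comm]
      refine Finset.sum_congr rfl fun i _ => ?_
      rw [Finset.sum_comm]
      refine Finset.sum_congr rfl fun j _ => ?_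
      rw [← Finset.mul_sum, hS i j, gk_sum_p_ind P (A i ∩ A j)]
    rw [step]
    have : ∑ i, ∑ j, x i * x j * S i j = x ⬝ᵥ S.mulVec x := by
      simp [dotProduct, Matrix.mulVec, Finset.mul_sum]
      refine Finset.sum_congr rfl fun i _ => Finset.sum_congr rfl fun j _ => by ring
    rw [this, hSx, dotProduct_comm, hc, hx]
  have hc0 : 0 ≤ c := by
    rw [← hEY2]
    exact Finset.sum_nonneg fun ω _ => mul_nonneg (hpnn ω) (sq_nonneg _)
  -- Y vanishes off U
  have hYU : ∀ ω, Y ω * U.indicator (fun _ => (1:ℝ)) ω = Y ω := by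
    intro ω
    by_cases h : ω ∈ U
    · simp [Set.indicator_apply, h]
    · have : Y ω = 0 := by
        rw [hY]
        refine Finset.sum_eq_zero fun i _ => ?_
        have : ω ∉ A i := fun hi => h (Set.mem_iUnion.2 ⟨i, hi⟩)
        simp [Set.indicator_apply, this]
      simp [this]
  -- Cauchy–Schwarz
  have CS := Finset.sum_mul_sq_le_sq_mul_sq Finset.univ
    (fun ω => Real.sqrt (p ω) * U.indicator (fun _ => (1:ℝ)) ω)
    (fun ω => Real.sqrt (p ω) * Y ω)
  have e1 : ∑ ω, (Real.sqrt (p ω) * U.indicator (fun _ => (1:ℝ)) ω)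
      * (Real.sqrt (p ω) * Y ω) = c := by
    rw [← hEY]
    refine Finset.sum_congr rfl fun ω _ => ?_
    have : Real.sqrt (p ω) * Real.sqrt (p ω) = p ω := Real.mul_self_sqrt (hpnn ω)
    calc (Real.sqrt (p ω) * U.indicator (fun _ => (1:ℝ)) ω) * (Real.sqrt (p ω) * Y ω)
        = (Real.sqrt (p ω) * Real.sqrt (p ω)) * (Y ω * U.indicator (fun _ => (1:ℝ)) ω) := by ring
      _ = p ω * Y ω := by rw [this, hYU ω]
  have e2 : ∑ ω, (Real.sqrt (p ω) * U.indicator (fun _ => (1:ℝ)) ω) ^ 2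
      = (P U).toReal := by
    rw [gk_sum_p_ind P U]
    refine Finset.sum_congr rfl fun ω _ => ?_
    have h1 : Real.sqrt (p ω) ^ 2 = p ω := Real.sq_sqrt (hpnn ω)
    have h2 : U.indicator (fun _ => (1:ℝ)) ω ^ 2 = U.indicator (fun _ => (1:ℝ)) ω := by
      by_cases h : ω ∈ U <;> simp [Set.indicator_apply, h]
    rw [mul_pow, h1, h2]
  have e3 : ∑ ω, (Real.sqrt (p ω) * Y ω) ^ 2 = c := by
    rw [← hEY2]
    refine Finset.sum_congr rfl fun ω _ => ?_
    rw [mul_pow, Real.sq_sqrt (hpnn ω)]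
  rw [e1, e2, e3] at CS
  -- conclude
  rcases eq_or_lt_of_le hc0 with h0 | h0
  · rw [ge_iff_le, ← h0]; exact ENNReal.toReal_nonneg
  · rw [ge_iff_le]
    have : c * c ≤ (P U).toReal * c := by rw [← sq]; exact CS
    exact le_of_mul_le_mul_right this h0
end

section
/- For any vector c ∈ ℝ^N with ∑_i ∑_j c_i c_j P(A_i ∩ A_j) > 0, one has P(⋃_{i=1}^N A_i) ≥ (∑_i c_i P(A_i))² / (∑_i ∑_j c_i c_j P(A_i ∩ A_j)). -/
/-!
With `X = ∑ i, c i • 1_{A i}` one has `E[X] = ∑ i, c i P(A i)` and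
`E[X²] = ∑ i j, c i c j P(A i ∩ A j)`; since `X` vanishes off `U = ⋃ i, A i`,
Cauchy–Schwarz applied to `X = 1_U X` gives `E[X]² ≤ P(U) E[X²]`.
-/

open MeasureTheory Finset

theorem sq_integral_le_measureReal_mul_integral_sq {Ω : Type*} [Fintype Ω] [MeasurableSpace Ω]
    [MeasurableSingletonClass Ω] (μ : Measure Ω) [IsFiniteMeasure μ] {X : Ω → ℝ} {s : Set Ω}
    (hX : ∀ ω ∉ s, X ω = 0) :
    (∫ ω, X ω ∂μ) ^ 2 ≤ μ.real s * ∫ ω, X ω ^ 2 ∂μ := by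
  rw [← integral_indicator_one s.toFinite.measurableSet]
  simp only [integral_fintype Integrable.of_finite, smul_eq_mul]
  refine sum_sq_le_sum_mul_sum_of_sq_le_mul _ (fun ω _ => ?_) (fun ω _ => by positivity)
    (fun ω _ => ?_)
  · exact mul_nonneg measureReal_nonneg (Set.indicator_nonneg (fun _ _ => zero_le_one) ω)
  · by_cases h : ω ∈ s
    · simp only [Set.indicator_of_mem h, Pi.one_apply]
      exact le_of_eq (by ring)
    · simp [hX ω h]

section

variable {Ω ι : Type*} [MeasurableSpace Ω] (μ : Measure Ω) [IsFiniteMeasure μ] (s : Finset ι)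
  {A : ι → Set Ω} (c : ι → ℝ)

theorem integral_sum_mul_indicator_one (hA : ∀ i ∈ s, MeasurableSet (A i)) :
    ∫ ω, ∑ i ∈ s, c i * (A i).indicator 1 ω ∂μ = ∑ i ∈ s, c i * μ.real (A i) := by
  rw [integral_finsetSum]
  · refine sum_congr rfl fun i hi => ?_
    rw [integral_const_mul, integral_indicator_one (hA i hi)]
  · exact fun i hi => ((integrable_const 1).indicator (hA i hi)).const_mul (c i)

theorem integral_sq_sum_mul_indicator_one (hA : ∀ i ∈ s, MeasurableSet (A i)) :
    ∫ ω, (∑ i ∈ s, c i * (A i).indicator 1 ω) ^ 2 ∂μ =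
      ∑ i ∈ s, ∑ j ∈ s, c i * c j * μ.real (A i ∩ A j) := by
  have hsq : ∀ ω, (∑ i ∈ s, c i * (A i).indicator 1 ω) ^ 2 =
      ∑ p ∈ s ×ˢ s, c p.1 * c p.2 * (A p.1 ∩ A p.2).indicator 1 ω := by
    intro ω
    simp only [sq, sum_mul_sum, sum_product, Set.inter_indicator_one, Pi.mul_apply]
    exact sum_congr rfl fun i _ => sum_congr rfl fun j _ => by ring
  simp_rw [hsq]
  rw [integral_sum_mul_indicator_one, sum_product]
  intro p hp
  rw [mem_product] at hp
  exact (hA _ hp.1).inter (hA _ hp.2)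

end

theorem gallot_kounias_variational {Ω : Type*} [Fintype Ω] [MeasurableSpace Ω]
    [DiscreteMeasurableSpace Ω] (P : Measure Ω) [IsProbabilityMeasure P] (N : ℕ)
    (A : Fin N → Set Ω) (c : Fin N → ℝ)
    (hpos : 0 < ∑ i : Fin N, ∑ j : Fin N, c i * c j * (P (A i ∩ A j)).toReal) :
    (P (⋃ i, A i)).toReal ≥
      (∑ i : Fin N, c i * (P (A i)).toReal) ^ 2 /
        (∑ i : Fin N, ∑ j : Fin N, c i * c j * (P (A i ∩ A j)).toReal) := by
  simp only [← measureReal_def] at hpos ⊢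
  have hA : ∀ i ∈ univ, MeasurableSet (A i) := fun i _ => .of_discrete
  have hX : ∀ ω ∉ ⋃ i, A i, ∑ i, c i * (A i).indicator 1 ω = 0 := fun ω hω =>
    sum_eq_zero fun i _ => by
      rw [Set.indicator_of_notMem fun h => hω (Set.mem_iUnion_of_mem i h), mul_zero]
  rw [ge_iff_le, div_le_iff₀ hpos, ← integral_sum_mul_indicator_one P univ c hA,
    ← integral_sq_sum_mul_indicator_one P univ c hA]
  exact sq_integral_le_measureReal_mul_integral_sq P hX
end
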